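/- arXiv:2104.11411 — 2 statements merged into one kernel-verified Lean document; each statement's English description precedes it below -/
import Mathlib

section
/- In the 4-cycle scenario with measurements X = {a,b,c,d}, outcomes O = {0,1}, contexts {a,b}, {b,c}, {c,d}, {d,a}, and the possibilistic model whose supported events are 00 and 11 on each of {a,b}, {b,c}, {c,d} and all four events on {d,a}: letting G(V) be the free semimodule over the Boolean semifield 𝔹 (where 1 + 1 = 1) on the supported events of V (restrictions extended 𝔹-linearly from restriction of events), there is no compatible family (r_V ∈ G(V)) whose component at {d,a} equals the basis element [01] (the event d ↦ 0, a ↦ 1), and likewise none with component [10]. Hence these sections have non-trivial generalized obstruction, witnessing the 𝔹-contextuality of the model. -/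
/-! The 4-cycle scenario: measurements `a,b,c,d = 0,1,2,3 : Fin 4`, outcomes `Fin 2`,
contexts `{k, k+1}` for `k : Fin 4`.  `G(V)` is the free semimodule over the Boolean
semifield `𝔹` on the supported events of `V`: its elements are formal 𝔹-linear
combinations of basis events, i.e. finite sets of supported events, with `+` given by
union; restriction maps are extended `𝔹`-linearly from restriction of events, i.e.
given by images of finite sets. -/

/-- The supported events: `00`, `11` on `{a,b}`, `{b,c}`, `{c,d}`; all four on `{d,a}`. -/
def Supp4 (k : Fin 4) (s : Fin 2 × Fin 2) : Prop :=
  if k = 3 then True else s.1 = s.2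

instance (k : Fin 4) : DecidablePred (Supp4 k) := by unfold Supp4; infer_instance

/-- The free `𝔹`-semimodule on the supported events of context `k`, realized as finite
sets of basis events with union as addition. -/
def G4 (k : Fin 4) : Type := Finset {s : Fin 2 × Fin 2 // Supp4 k s}

/-- `𝔹`-linear restriction of `G4 k` to the first listed measurement `k`. -/
def resFstB (k : Fin 4) (f : G4 k) : Finset (Fin 2) := f.image fun s => s.1.1

/-- `𝔹`-linear restriction of `G4 k` to the second listed measurement `k+1`. -/
def resSndB (k : Fin 4) (f : G4 k) : Finset (Fin 2) := f.image fun s => s.1.2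

/-- A compatible family: the restrictions to the shared single measurements agree. -/
def CompatB (r : ∀ k : Fin 4, G4 k) : Prop :=
  ∀ k : Fin 4, resSndB k (r k) = resFstB (k + 1) (r (k + 1))

lemma supp4_three (s : Fin 2 × Fin 2) : Supp4 3 s := by simp [Supp4]
lemma res_eq (k : Fin 4) (h : k ≠ 3) (f : G4 k) : resFstB k f = resSndB k f := by
  unfold resFstB resSndB
  congr 1
  funext s
  have := s.2
  unfold Supp4 at this
  rw [if_neg h] at this
  exact this

lemma chain (r : ∀ k : Fin 4, G4 k) (h : CompatB r) :
    resSndB 3 (r 3) = resFstB 3 (r 3) := by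
  have h0 : resSndB 0 (r 0) = resFstB 1 (r 1) := h 0
  have h1 : resSndB 1 (r 1) = resFstB 2 (r 2) := h 1
  have h2 : resSndB 2 (r 2) = resFstB 3 (r 3) := h 2
  have h3 : resSndB 3 (r 3) = resFstB 0 (r 0) := h 3
  rw [h3, res_eq 0 (by decide), h0, res_eq 1 (by decide), h1,
    res_eq 2 (by decide), h2]

/-- **The diagonal sections of `{d,a}` have non-trivial generalized obstruction over
`𝔹`.**  In the free `𝔹`-semimodule presheaf of the 4-cycle model there is no
compatible family whose component at `{d,a}` is the basis element `[01]`, and none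
whose component is `[10]`; the model is `𝔹`-contextual. -/
theorem no_boolean_compatible_family_extending_diagonal_sections :
    (¬ ∃ r : ∀ k : Fin 4, G4 k,
        CompatB r ∧ r 3 = ({⟨(0, 1), supp4_three _⟩} : Finset {s : Fin 2 × Fin 2 // Supp4 3 s})) ∧
    (¬ ∃ r : ∀ k : Fin 4, G4 k,
        CompatB r ∧ r 3 = ({⟨(1, 0), supp4_three _⟩} : Finset {s : Fin 2 × Fin 2 // Supp4 3 s})) := by
  constructor <;> rintro ⟨r, hc, hr⟩ <;> have := chain r hc <;>
    rw [hr] at this <;> simp [resFstB, resSndB, Finset.image_singleton] at this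
end

section
/- Every non-disturbing empirical model with nonnegative real values on a measurement cover (finite X, finite O, 𝒰) admits a signed global realization: there exists q : (X → O) → ℝ with Σ_{g : X→O} q(g) = 1 such that d_U(s) = Σ_{g : g|_U = s} q(g) for all U ∈ 𝒰 and all s : U → O. -/
/-! Measurement covers, `R`-empirical models, non-disturbance, and hidden-variable
realizations. -/

section Model
variable {X O : Type} [Fintype X] [DecidableEq X] [Fintype O] [DecidableEq O]

/-- Events over a subset `V ⊆ X`: outcome assignments `V → O`. -/
def Evt (V : Finset X) : Type _ := {x // x ∈ V} → O

instance (V : Finset X) : Fintype (Evt (O := O) V) := by unfold Evt; infer_instance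
instance (V : Finset X) : DecidableEq (Evt (O := O) V) := by unfold Evt; infer_instance

/-- Restriction of events along an inclusion of subsets. -/
def restrictE {V W : Finset X} (h : W ⊆ V) (s : Evt (O := O) V) : Evt (O := O) W :=
  fun x => s ⟨x.1, h x.2⟩

/-- Restriction of a global assignment to a subset. -/
def globRestrict (g : X → O) (V : Finset X) : Evt (O := O) V := fun x => g x.1

end Model

/-! Fix a global assignment `g₀` and lift a function `φ` on `V`-events to `X → O` by placing
the mass of `t` on the assignment equal to `t` on `V` and to `g₀` off `V`. The marginal of such
a lift on `W` is, up to the indicator that `g₀` agrees with the event on `W \ V`, the marginal of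
`φ` on `V ∩ W`; in particular it vanishes if that marginal of `φ` does.

Contexts are then realised one at a time, starting from the point mass at `g₀`: if `q` realises
some contexts, `q + lift (d k - marginal of q on U k)` also realises `U k`, and by non-disturbance
the correction has zero marginal on `U k ∩ U j` for each context `U j` realised before, so those
marginals do not move. The corrections are signed but have total mass zero. -/

section Realization

open Finset

variable {X O : Type} [Fintype X] [DecidableEq X] [Fintype O] [DecidableEq O]
  {M : Type*} [AddCommGroup M]

def globMarginal (V : Finset X) (q : (X → O) → M) (t : Evt (O := O) V) : M :=
  ∑ g ∈ univ.filter (fun g : X → O => globRestrict g V = t), q g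

def marginalE {V W : Finset X} (h : W ⊆ V) (φ : Evt (O := O) V → M) (t : Evt (O := O) W) : M :=
  ∑ s ∈ univ.filter (fun s => restrictE h s = t), φ s

def fillE (g₀ : X → O) {V : Finset X} (t : Evt (O := O) V) : X → O :=
  fun x => if hx : x ∈ V then t ⟨x, hx⟩ else g₀ x

def liftE (g₀ : X → O) {V : Finset X} (φ : Evt (O := O) V → M) (g : X → O) : M :=
  ∑ t ∈ univ.filter (fun t => fillE g₀ t = g), φ t

omit [Fintype X] [Fintype O] [DecidableEq O] in
lemma globRestrict_fillE (g₀ : X → O) {V : Finset X} (t : Evt (O := O) V) :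
    globRestrict (fillE g₀ t) V = t := by
  funext x
  simp [globRestrict, fillE, x.2]

lemma globMarginal_add (V : Finset X) (q r : (X → O) → M) :
    globMarginal V (q + r) = globMarginal V q + globMarginal V r := by
  funext t
  simp only [globMarginal, Pi.add_apply, sum_add_distrib]

lemma sum_globMarginal (V : Finset X) (q : (X → O) → M) :
    ∑ t, globMarginal V q t = ∑ g, q g :=
  sum_fiberwise univ (fun g => globRestrict g V) q

lemma marginalE_globMarginal {V W : Finset X} (h : W ⊆ V) (q : (X → O) → M) :
    marginalE h (globMarginal V q) = globMarginal W q := by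
  funext t
  simp only [marginalE, globMarginal]
  rw [sum_fiberwise_eq_sum_filter]
  simp only [mem_filter, mem_univ, true_and]
  rfl

lemma sum_liftE (g₀ : X → O) {V : Finset X} (φ : Evt (O := O) V → M) :
    ∑ g, liftE g₀ φ g = ∑ t, φ t :=
  sum_fiberwise univ (fillE g₀) φ

lemma globMarginal_liftE (g₀ : X → O) {V : Finset X} (φ : Evt (O := O) V → M)
    (W : Finset X) (s : Evt (O := O) W) :
    globMarginal W (liftE g₀ φ) s =
      ∑ t ∈ univ.filter (fun t => globRestrict (fillE g₀ t) W = s), φ t := by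
  simp only [globMarginal, liftE]
  rw [sum_fiberwise_eq_sum_filter]
  simp

lemma globMarginal_liftE_self (g₀ : X → O) {V : Finset X} (φ : Evt (O := O) V → M) :
    globMarginal V (liftE g₀ φ) = φ := by
  funext t
  rw [globMarginal_liftE]
  simp only [globRestrict_fillE, filter_eq', mem_univ, if_true, sum_singleton]

omit [Fintype X] [Fintype O] [DecidableEq O] in
lemma globRestrict_fillE_eq_iff (g₀ : X → O) {V W : Finset X} (t : Evt (O := O) V)
    (s : Evt (O := O) W) :
    globRestrict (fillE g₀ t) W = s ↔
      restrictE inter_subset_left t = restrictE inter_subset_right s ∧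
        ∀ x (hx : x ∈ W), x ∉ V → g₀ x = s ⟨x, hx⟩ := by
  constructor
  · rintro rfl
    refine ⟨funext fun x => ?_, fun x _ hxV => ?_⟩
    · simp [restrictE, globRestrict, fillE, (mem_inter.mp x.2).1]
    · simp [globRestrict, fillE, hxV]
  · rintro ⟨hts, hg₀⟩
    funext ⟨x, hxW⟩
    by_cases hxV : x ∈ V
    · simpa [restrictE, globRestrict, fillE, hxV] using
        congrFun hts ⟨x, mem_inter.mpr ⟨hxV, hxW⟩⟩
    · simp [globRestrict, fillE, hxV, hg₀ x hxW hxV]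

lemma globMarginal_liftE_eq_zero (g₀ : X → O) {V W : Finset X} (φ : Evt (O := O) V → M)
    (hφ : marginalE (inter_subset_left (s₂ := W)) φ = 0) :
    globMarginal W (liftE g₀ φ) = 0 := by
  funext s
  rw [globMarginal_liftE]
  simp_rw [globRestrict_fillE_eq_iff]
  by_cases hs : ∀ x (hx : x ∈ W), x ∉ V → g₀ x = s ⟨x, hx⟩
  · simpa only [and_iff_left hs, marginalE, Pi.zero_apply] using
      congrFun hφ (restrictE inter_subset_right s)
  · simp [hs]

omit [Fintype X] in
lemma marginalE_sub {V W : Finset X} (h : W ⊆ V) (φ χ : Evt (O := O) V → M) :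
    marginalE h (φ - χ) = marginalE h φ - marginalE h χ := by
  funext t
  simp only [marginalE, Pi.sub_apply, sum_sub_distrib]

variable {ι : Type*} {U : ι → Finset X} {d : ∀ i, Evt (O := O) (U i) → M}

def IsNondisturbing (U : ι → Finset X) (d : ∀ i, Evt (O := O) (U i) → M) : Prop :=
  ∀ i j, marginalE (inter_subset_left (s₂ := U j)) (d i) = marginalE inter_subset_right (d j)

lemma IsNondisturbing.marginalE_sub_globMarginal_eq_zero (hnd : IsNondisturbing U d)
    {q : (X → O) → M} {j : ι} (hj : globMarginal (U j) q = d j) (k : ι) :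
    marginalE (inter_subset_left (s₂ := U j)) (d k - globMarginal (U k) q) = 0 := by
  rw [marginalE_sub, hnd k j, ← hj, marginalE_globMarginal, marginalE_globMarginal, sub_self]

theorem IsNondisturbing.exists_globMarginal_eq [DecidableEq ι] (hnd : IsNondisturbing U d)
    (g₀ : X → O) {m : M} (hnorm : ∀ i, ∑ s, d i s = m) (I : Finset ι) :
    ∃ q : (X → O) → M, ∑ g, q g = m ∧ ∀ i ∈ I, globMarginal (U i) q = d i := by
  induction I using Finset.induction_on with
  | empty => exact ⟨Pi.single g₀ m, by simp, by simp⟩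
  | insert k I _ ih =>
    obtain ⟨q, hq, hqI⟩ := ih
    refine ⟨q + liftE g₀ (d k - globMarginal (U k) q), ?_, ?_⟩
    · simp only [Pi.add_apply, sum_add_distrib, sum_liftE, Pi.sub_apply, sum_sub_distrib]
      rw [hnorm, sum_globMarginal, hq, sub_self, add_zero]
    · intro j hj
      rw [globMarginal_add]
      rcases mem_insert.mp hj with rfl | hjI
      · rw [globMarginal_liftE_self, add_sub_cancel]
      · have hcorr := hnd.marginalE_sub_globMarginal_eq_zero (hqI j hjI) k
        rw [globMarginal_liftE_eq_zero g₀ _ hcorr, add_zero, hqI j hjI]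

omit [DecidableEq X] [Fintype X] [Fintype O] [DecidableEq O] in
lemma nonempty_assignment_of_cover (hcov : ∀ x : X, ∃ i, x ∈ U i)
    (hev : ∀ i, Nonempty (Evt (O := O) (U i))) : Nonempty (X → O) := by
  cases isEmpty_or_nonempty X with
  | inl hX => exact ⟨isEmptyElim⟩
  | inr hX =>
    obtain ⟨x⟩ := hX
    obtain ⟨i, hx⟩ := hcov x
    obtain ⟨s⟩ := hev i
    exact ⟨fun _ => s ⟨x, hx⟩⟩

end Realization

theorem nondisturbing_admits_signed_global_realization_general
    {X O : Type} [Fintype X] [DecidableEq X] [Fintype O] [DecidableEq O]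
    {n : ℕ} (U : Fin n → Finset X)
    (hcov : ∀ x : X, ∃ i, x ∈ U i)
    (d : ∀ i : Fin n, Evt (O := O) (U i) → ℝ)
    (hnorm : ∀ i, ∑ s : Evt (O := O) (U i), d i s = 1)
    (hnd : ∀ i j : Fin n, ∀ t : Evt (O := O) (U i ∩ U j),
      ∑ s ∈ Finset.univ.filter
          (fun s : Evt (O := O) (U i) => restrictE Finset.inter_subset_left s = t),
        d i s =
      ∑ s ∈ Finset.univ.filter
          (fun s : Evt (O := O) (U j) => restrictE Finset.inter_subset_right s = t),
        d j s) :
    ∃ q : (X → O) → ℝ,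
      ∑ g : X → O, q g = 1 ∧
      ∀ (i : Fin n) (s : Evt (O := O) (U i)),
        d i s = ∑ g ∈ Finset.univ.filter
            (fun g : X → O => globRestrict g (U i) = s),
          q g := by
  obtain ⟨g₀⟩ := nonempty_assignment_of_cover (O := O) hcov fun i =>
    Finset.univ_nonempty_iff.mp (Finset.nonempty_of_sum_ne_zero (f := d i) (by simp [hnorm i]))
  have hnd' : IsNondisturbing U d := fun i j => funext (hnd i j)
  obtain ⟨q, hq, hmarg⟩ := hnd'.exists_globMarginal_eq g₀ hnorm Finset.univ
  exact ⟨q, hq, fun i s => (congrFun (hmarg i (Finset.mem_univ i)) s).symm⟩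

/-- **Every non-disturbing model has a signed global realization.**  A non-disturbing
empirical model with nonnegative real values admits a (possibly signed) global
distribution `q : (X → O) → ℝ` of total mass `1` marginalizing to the model on every
context. -/
theorem nondisturbing_admits_signed_global_realization
    {X O : Type} [Fintype X] [DecidableEq X] [Fintype O] [DecidableEq O]
    {n : ℕ} (U : Fin n → Finset X)
    (hinj : Function.Injective U) (hne : ∀ i, (U i).Nonempty)
    (hcov : ∀ x : X, ∃ i, x ∈ U i)
    (d : ∀ i : Fin n, Evt (O := O) (U i) → ℝ)
    (hpos : ∀ (i : Fin n) (s : Evt (O := O) (U i)), 0 ≤ d i s)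
    (hnorm : ∀ i, ∑ s : Evt (O := O) (U i), d i s = 1)
    (hnd : ∀ i j : Fin n, ∀ t : Evt (O := O) (U i ∩ U j),
      ∑ s ∈ Finset.univ.filter
          (fun s : Evt (O := O) (U i) => restrictE Finset.inter_subset_left s = t),
        d i s =
      ∑ s ∈ Finset.univ.filter
          (fun s : Evt (O := O) (U j) => restrictE Finset.inter_subset_right s = t),
        d j s) :
    ∃ q : (X → O) → ℝ,
      ∑ g : X → O, q g = 1 ∧
      ∀ (i : Fin n) (s : Evt (O := O) (U i)),
        d i s = ∑ g ∈ Finset.univ.filter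
            (fun g : X → O => globRestrict g (U i) = s),
          q g :=
  nondisturbing_admits_signed_global_realization_general U hcov d hnorm hnd
end
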